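/- Let (K, v) be a separably closed valued field of characteristic p > 0 with value group Γ = v(K^×) (Γ is then divisible). Let a_0, …, a_d ∈ K with a_0 ≠ 0, and let n ∈ K with n ≠ 0. Then there exists m ∈ K, m ≠ 0, such that ∑_{i=0}^{d} a_i·m^{p^i} = n and v(n) = min_{i : a_i ≠ 0} (p^i·v(m) + v(a_i)). -/

import Mathlib

/-- A valuation on a field `K` with values in the linearly ordered abelian group `Γ`
(together with `∞ = ⊤`), surjective onto `Γ`, i.e. `Γ = v(K^×)`. -/
structure ValuedFieldAux (K : Type*) [Field K] (Γ : Type*)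
    [AddCommGroup Γ] [LinearOrder Γ] [IsOrderedAddMonoid Γ] where
  v : K → WithTop Γ
  v_eq_top_iff : ∀ x : K, v x = ⊤ ↔ x = 0
  v_mul : ∀ x y : K, v (x * y) = v x + v y
  v_add : ∀ x y : K, min (v x) (v y) ≤ v (x + y)
  v_surj : ∀ γ : Γ, ∃ x : K, v x = (γ : WithTop Γ)


/-! Rescale `m = c * z`, where `c` is chosen so that `p ^ i • v c + v (a i) ≥ v n` for all `i`,
with equality for some `i₀`; such `c` exists because `v(Kˣ)` is `p`-divisible, which follows
from the solvability of the Artin–Schreier equations `y ^ p - y = x`. The rescaled coefficients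
`b i = a i * c ^ p ^ i` then have `v (b i₀) = v n`. The polynomial `∑ b i X ^ p ^ i - n` has
derivative `b 0 ≠ 0`, so it is separable and splits in `K`, and a Newton-polygon estimate on
Vieta's formulas shows that its root `z` of largest valuation has `v z ≥ 0`. Hence
`p ^ i • v m + v (a i) ≥ v n` for all `i`, and the ultrametric inequality applied to
`n = ∑ a i * m ^ p ^ i` gives the reverse inequality. -/

open Polynomial Finset

namespace AddValuation

variable {K : Type*} [Field K] {Γ₀ : Type*} [LinearOrderedAddCommGroupWithTop Γ₀]
  (v : AddValuation K Γ₀)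

theorem map_multiset_prod (s : Multiset K) : v s.prod = (s.map v).sum := by
  induction s using Multiset.induction with
  | empty => simp
  | cons x s ih => simp [v.map_mul, ih]

theorem map_le_multiset_sum {s : Multiset K} {g : Γ₀} (h : ∀ x ∈ s, g ≤ v x) :
    g ≤ v s.sum := by
  induction s using Multiset.induction with
  | empty => simp
  | cons x s ih =>
    rw [Multiset.forall_mem_cons] at h
    rw [Multiset.sum_cons]
    exact v.map_le_add h.1 (ih h.2)

theorem map_neg_one_pow (j : ℕ) : v ((-1) ^ j) = 0 := by
  rw [v.map_pow, v.map_neg, v.map_one, nsmul_zero]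

theorem nsmul_map_eq_of_pow_sub_eq {p : ℕ} (hp : 1 < p) {x y : K} (hxy : y ^ p - y = x)
    (hx : v x < 0) : p • v y = v x := by
  have hy : v y < 0 := by
    by_contra! hy
    have := v.map_le_sub (by rw [v.map_pow]; exact nsmul_nonneg hy p) hy
    exact (hx.trans_le (hxy ▸ this)).false
  have hy_top : v y ≠ ⊤ := (hy.trans (by simp)).ne
  have hlt : v (y ^ p) < v y :=
    calc v (y ^ p) = p • v y := v.map_pow y p
      _ ≤ 2 • v y := nsmul_le_nsmul_left_of_nonpos hy.le hp
      _ = v y + v y := two_nsmul _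
      _ < v y + 0 := (add_lt_add_iff_right_of_ne_top hy_top).2 hy
      _ = v y := add_zero _
  rw [← hxy, v.map_sub_eq_of_lt_left hlt, v.map_pow]

theorem exists_nsmul_map_eq {p : ℕ} (hp : 1 < p) [CharP K p] [IsSepClosed K] (x : K) :
    ∃ y, p • v y = v x := by
  have divide_neg : ∀ x : K, v x < 0 → ∃ y, p • v y = v x := fun x hx => by
    obtain ⟨y, hy⟩ := IsSepClosed.exists_root_C_mul_X_pow_add_C_mul_X_add_C' p p 1 (-1) (-x)
      dvd_rfl hp (neg_ne_zero.2 one_ne_zero)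
    exact ⟨y, v.nsmul_map_eq_of_pow_sub_eq hp (by linear_combination hy) hx⟩
  rcases lt_trichotomy (v x) 0 with hx | hx | hx
  · exact divide_neg x hx
  · exact ⟨1, by rw [v.map_one, nsmul_zero, hx]⟩
  · obtain rfl | hx0 := eq_or_ne x 0
    · exact ⟨0, by rw [← v.map_pow, zero_pow (by omega)]⟩
    have hinv : v x⁻¹ < 0 := by
      by_contra! h
      have := add_le_add_left h (v x)
      rw [← v.map_mul, inv_mul_cancel₀ hx0, v.map_one, zero_add] at this
      exact (hx.trans_le this).false
    obtain ⟨y, hy⟩ := divide_neg x⁻¹ hinv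
    refine ⟨y⁻¹, ?_⟩
    rw [← v.map_pow, inv_pow, v.map_inv, v.map_pow, hy, ← v.map_inv, inv_inv]

theorem exists_pow_nsmul_map_eq {p : ℕ} (hp : 1 < p) [CharP K p] [IsSepClosed K] (k : ℕ)
    (x : K) : ∃ y, p ^ k • v y = v x := by
  induction k generalizing x with
  | zero => exact ⟨x, by rw [pow_zero, one_nsmul]⟩
  | succ k ih =>
    obtain ⟨y, hy⟩ := ih x
    obtain ⟨z, hz⟩ := v.exists_nsmul_map_eq hp y
    exact ⟨z, by rw [pow_succ', mul_nsmul, hz, hy]⟩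

/-- `c` is the balancing scalar `c i` (with `p ^ i • v (c i) + v (a i) = v n`) of largest
valuation. -/
theorem exists_eq_inf_nsmul_add {p : ℕ} (hdiv : ∀ (k : ℕ) (x : K), ∃ y, p ^ k • v y = v x)
    (s : Finset ℕ) {a : ℕ → K} {i₁ : ℕ} (hi₁ : i₁ ∈ s) (ha : a i₁ ≠ 0) (n : K) :
    ∃ c, v n = s.inf fun i => p ^ i • v c + v (a i) := by
  classical
  choose c hc using fun i => hdiv i (n / a i)
  have hbal : ∀ i, a i ≠ 0 → p ^ i • v (c i) + v (a i) = v n := fun i hi => by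
    rw [hc, ← v.map_mul, div_mul_cancel₀ _ hi]
  obtain ⟨i₀, hi₀, hmax⟩ := (s.filter (a · ≠ 0)).exists_max_image (fun i => v (c i))
    ⟨i₁, mem_filter.2 ⟨hi₁, ha⟩⟩
  rw [mem_filter] at hi₀
  refine ⟨c i₀, le_antisymm (Finset.le_inf fun i hi => ?_) ?_⟩
  · by_cases hai : a i = 0
    · simp [hai]
    · rw [← hbal i hai]
      gcongr
      exact hmax i (mem_filter.2 ⟨hi, hai⟩)
  · exact (Finset.inf_le hi₀.1).trans (hbal i₀ hi₀.2).le

theorem map_prod_le_map_prod_add_nsmul [DecidableEq K] {s t : Multiset K} (hts : t ≤ s)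
    {M : Γ₀} (hM : ∀ x ∈ s, v x ≤ M) : v s.prod ≤ v t.prod + Multiset.card (s - t) • M := by
  conv_lhs => rw [← add_tsub_cancel_of_le hts, Multiset.prod_add, v.map_mul]
  gcongr
  rw [v.map_multiset_prod, ← Multiset.card_map v]
  exact Multiset.sum_le_card_nsmul _ _ fun _ hy => by
    obtain ⟨x, hx, rfl⟩ := Multiset.mem_map.1 hy
    exact hM x (Multiset.mem_of_le tsub_le_self hx)

open LinearOrderedAddCommGroupWithTop in
theorem map_prod_le_map_esymm_add_nsmul {s : Multiset K} {z : K} (hz : z ≠ 0)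
    (hs : ∀ x ∈ s, v x ≤ v z) {k : ℕ} (hk : k ≤ Multiset.card s) :
    v s.prod ≤ v (s.esymm (Multiset.card s - k)) + k • v z := by
  classical
  have hkz : k • v z ≠ ⊤ := by rw [← v.map_pow, v.ne_top_iff]; exact pow_ne_zero k hz
  suffices h : v s.prod + -(k • v z) ≤ v (s.esymm (Multiset.card s - k)) by
    calc v s.prod = v s.prod + -(k • v z) + k • v z := (neg_add_cancel_right_of_ne_top hkz _).symm
      _ ≤ _ := by gcongr
  refine v.map_le_multiset_sum fun x hx => ?_
  obtain ⟨t, ht, rfl⟩ := Multiset.mem_map.1 hx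
  obtain ⟨hts, htcard⟩ := Multiset.mem_powersetCard.1 ht
  have hcard : Multiset.card (s - t) = k := by rw [Multiset.card_sub hts, htcard]; omega
  calc v s.prod + -(k • v z) ≤ v t.prod + k • v z + -(k • v z) := by
        gcongr; exact hcard ▸ v.map_prod_le_map_prod_add_nsmul hts hs
    _ = v t.prod := add_neg_cancel_right_of_ne_top hkz _

theorem map_coeff_of_splits {P : K[X]} (hP : P.Splits) {k : ℕ} (hk : k ≤ P.natDegree) :
    v (P.coeff k) = v P.leadingCoeff + v (P.roots.esymm (P.natDegree - k)) := by
  rw [coeff_eq_esymm_roots_of_splits hP hk, v.map_mul, v.map_mul, map_neg_one_pow, add_zero]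

/-- Newton-polygon argument: a root `z` of largest valuation satisfies
`v (coeff 0) ≤ v (coeff k) + k • v z`, so `v (coeff k) ≤ v (coeff 0)` forces `0 ≤ v z`. -/
theorem exists_mem_roots_nonneg {P : K[X]} (hP : P.Splits) {k : ℕ} (hk0 : 0 < k)
    (hk : k ≤ P.natDegree) (hv : v (P.coeff k) ≤ v (P.coeff 0)) : ∃ z ∈ P.roots, 0 ≤ v z := by
  have hcard : Multiset.card P.roots = P.natDegree := splits_iff_card_roots.1 hP
  have hP0 : P ≠ 0 := by rintro rfl; simp at hk; omega
  obtain ⟨z, hz, hmax⟩ := Multiset.exists_max_image v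
    (s := P.roots) (by rw [← Multiset.card_pos, hcard]; omega)
  refine ⟨z, hz, ?_⟩
  obtain rfl | hz0 := eq_or_ne z 0
  · simp
  have hcoeff0 : v (P.coeff 0) ≠ ⊤ := by
    rw [v.ne_top_iff]
    intro h0
    have h0_root : (0 : K) ∈ P.roots :=
      (mem_roots hP0).2 (by rwa [IsRoot, ← coeff_zero_eq_eval_zero])
    exact hz0 ((v.top_iff).1 (top_le_iff.1 (v.map_zero ▸ hmax 0 h0_root)))
  have key : v (P.coeff 0) ≤ v (P.coeff 0) + k • v z :=
    calc v (P.coeff 0) = v P.leadingCoeff + v P.roots.prod := by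
          rw [v.map_coeff_of_splits hP (Nat.zero_le _), Nat.sub_zero, ← hcard]
          simp [Multiset.esymm, Multiset.powersetCard_self]
      _ ≤ v P.leadingCoeff + (v (P.roots.esymm (P.natDegree - k)) + k • v z) := by
          gcongr; exact hcard ▸ v.map_prod_le_map_esymm_add_nsmul hz0 hmax (hcard ▸ hk)
      _ = v (P.coeff k) + k • v z := by rw [v.map_coeff_of_splits hP hk, add_assoc]
      _ ≤ v (P.coeff 0) + k • v z := by gcongr
  have hnonneg : 0 ≤ k • v z := (add_le_add_iff_right_of_ne_top hcoeff0).1 (by simpa using key)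
  exact (nsmul_nonneg_iff hk0.ne').1 hnonneg

end AddValuation

section AdditivePolynomial

variable {R : Type*} [CommRing R] (p d : ℕ) (a : ℕ → R)

noncomputable def additivePolynomial : R[X] :=
  ∑ i ∈ range (d + 1), C (a i) * X ^ p ^ i

theorem eval_additivePolynomial (x : R) :
    (additivePolynomial p d a).eval x = ∑ i ∈ range (d + 1), a i * x ^ p ^ i := by
  simp [additivePolynomial, eval_finsetSum]

theorem eval_additivePolynomial_mul (c x : R) :
    (additivePolynomial p d a).eval (c * x) =
      (additivePolynomial p d fun i => a i * c ^ p ^ i).eval x := by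
  simp [eval_additivePolynomial, mul_pow, mul_assoc]

variable {p d}

theorem coeff_additivePolynomial_zero (hp : p ≠ 0) : (additivePolynomial p d a).coeff 0 = 0 := by
  simp [coeff_zero_eq_eval_zero, eval_additivePolynomial, hp]

theorem coeff_additivePolynomial_pow (hp : 1 < p) {i : ℕ} (hi : i ≤ d) :
    (additivePolynomial p d a).coeff (p ^ i) = a i := by
  rw [additivePolynomial, finsetSum_coeff, Finset.sum_eq_single i]
  · simp
  · intro j _ hji
    rw [coeff_C_mul_X_pow, if_neg fun h => hji (Nat.pow_right_injective hp h.symm)]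
  · simp; omega

theorem derivative_additivePolynomial [CharP R p] :
    derivative (additivePolynomial p d a) = C (a 0) := by
  rw [additivePolynomial, derivative_sum, Finset.sum_eq_single 0]
  · simp
  · intro i _ hi
    rw [derivative_C_mul_X_pow, Nat.cast_pow, CharP.cast_eq_zero, zero_pow hi, mul_zero, C_0,
      zero_mul]
  · simp

end AdditivePolynomial

section

variable {K : Type*} [Field K] {p d : ℕ} {a : ℕ → K}

theorem separable_additivePolynomial_sub_C [CharP K p] (ha0 : a 0 ≠ 0) (n : K) :
    (additivePolynomial p d a - C n).Separable := by
  rw [separable_def, derivative_sub, derivative_C, sub_zero, derivative_additivePolynomial]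
  exact ⟨0, C (a 0)⁻¹, by rw [zero_mul, zero_add, ← C_mul, inv_mul_cancel₀ ha0, C_1]⟩

variable {Γ₀ : Type*} [LinearOrderedAddCommGroupWithTop Γ₀] (v : AddValuation K Γ₀)

theorem exists_nonneg_eval_additivePolynomial_eq [CharP K p] [IsSepClosed K] (hp : 1 < p)
    (ha0 : a 0 ≠ 0) {n : K} (hn : n ≠ 0) {i : ℕ} (hi : i ≤ d) (hv : v (a i) ≤ v n) :
    ∃ z, 0 ≤ v z ∧ (additivePolynomial p d a).eval z = n := by
  set P := additivePolynomial p d a - C n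
  have hpi : p ^ i ≠ 0 := pow_ne_zero i (by omega)
  have hcoeff : P.coeff (p ^ i) = a i := by
    rw [coeff_sub, coeff_C, if_neg hpi, sub_zero, coeff_additivePolynomial_pow a hp hi]
  have hcoeff0 : P.coeff 0 = -n := by
    rw [coeff_sub, coeff_C_zero, coeff_additivePolynomial_zero a (by omega), zero_sub]
  have hai : a i ≠ 0 := by
    rintro hai
    rw [hai, v.map_zero, top_le_iff, v.top_iff] at hv
    exact hn hv
  obtain ⟨z, hz, hvz⟩ := v.exists_mem_roots_nonneg
    (IsSepClosed.splits_of_separable P (separable_additivePolynomial_sub_C ha0 n))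
    (Nat.pos_of_ne_zero hpi) (le_natDegree_of_ne_zero (hcoeff ▸ hai))
    (by rwa [hcoeff, hcoeff0, v.map_neg])
  refine ⟨z, hvz, ?_⟩
  simpa [P, sub_eq_zero] using ((mem_roots'.1 hz).2 : P.IsRoot z)

theorem inf_le_map_eval_additivePolynomial (x : K) :
    (range (d + 1)).inf (fun i => p ^ i • v x + v (a i)) ≤
      v ((additivePolynomial p d a).eval x) := by
  rw [eval_additivePolynomial]
  exact v.map_le_sum fun i hi =>
    (Finset.inf_le hi).trans_eq (by rw [v.map_mul, v.map_pow, add_comm])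

end

namespace ValuedFieldAux

variable {K : Type*} [Field K] {Γ : Type*} [AddCommGroup Γ] [LinearOrder Γ]
  [IsOrderedAddMonoid Γ]

theorem v_one (vf : ValuedFieldAux K Γ) : vf.v 1 = 0 := by
  have h := vf.v_mul 1 1
  rw [mul_one] at h
  have hne : vf.v 1 ≠ ⊤ := fun h1 => one_ne_zero ((vf.v_eq_top_iff 1).1 h1)
  exact ((add_right_inj_of_ne_top hne).1 (by rw [add_zero]; exact h)).symm

def toAddValuation (vf : ValuedFieldAux K Γ) : AddValuation K (WithTop Γ) :=
  AddValuation.of vf.v ((vf.v_eq_top_iff 0).2 rfl) vf.v_one vf.v_add vf.v_mul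

end ValuedFieldAux

/-- Let `(K, v)` be a separably closed valued field of characteristic
`p > 0`. Let `a_0, …, a_d ∈ K` with `a_0 ≠ 0`, and `n ∈ K`, `n ≠ 0`. Then there is
`m ≠ 0` with `∑ a_i·m^{p^i} = n` and `v n = min_{i : a_i ≠ 0} (p^i·v m + v a_i)`.
(Terms with `a_i = 0` have `v (a i) = ⊤` and hence do not contribute to the `inf`.) -/
theorem stmt_6 (p : ℕ) (hp : p.Prime) (K : Type*) [Field K] [CharP K p] [IsSepClosed K]
    (Γ : Type*) [AddCommGroup Γ] [LinearOrder Γ] [IsOrderedAddMonoid Γ] (vf : ValuedFieldAux K Γ)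
    (d : ℕ) (a : ℕ → K) (ha0 : a 0 ≠ 0) (n : K) (hn : n ≠ 0) :
    ∃ m : K, m ≠ 0 ∧ (∑ i ∈ Finset.range (d + 1), a i * m ^ (p ^ i)) = n ∧
      vf.v n = (Finset.range (d + 1)).inf (fun i => p ^ i • vf.v m + vf.v (a i)) := by
  let v := vf.toAddValuation
  have h0 : 0 ∈ range (d + 1) := mem_range.2 d.succ_pos
  obtain ⟨c, hc⟩ := v.exists_eq_inf_nsmul_add (v.exists_pow_nsmul_map_eq hp.one_lt) _ h0 ha0 n
  obtain ⟨i₀, hi₀, hci₀⟩ := (range (d + 1)).exists_mem_eq_inf ⟨0, h0⟩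
    (fun i => p ^ i • v c + v (a i))
  have hvn : v n = v (a i₀ * c ^ p ^ i₀) := by rw [hc, hci₀, v.map_mul, v.map_pow, add_comm]
  have hc0 : c ≠ 0 := by
    rintro rfl
    rw [zero_pow (pow_ne_zero _ hp.ne_zero), mul_zero, v.map_zero, v.top_iff] at hvn
    exact hn hvn
  obtain ⟨z, hz, hzn⟩ := exists_nonneg_eval_additivePolynomial_eq (a := fun i => a i * c ^ p ^ i)
    v hp.one_lt (mul_ne_zero ha0 (pow_ne_zero _ hc0)) hn (mem_range_succ_iff.1 hi₀) hvn.ge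
  rw [← eval_additivePolynomial_mul] at hzn
  refine ⟨c * z, ?_, by rwa [eval_additivePolynomial] at hzn, ?_⟩
  · rintro hcz
    rw [hcz, ← coeff_zero_eq_eval_zero, coeff_additivePolynomial_zero a hp.ne_zero] at hzn
    exact hn hzn.symm
  change v n = (range (d + 1)).inf fun i => p ^ i • v (c * z) + v (a i)
  have hcz : v c ≤ v (c * z) := by rw [v.map_mul]; exact le_add_of_nonneg_right hz
  refine le_antisymm (hc.trans_le (Finset.inf_mono_fun fun i _ => by gcongr)) ?_
  exact (inf_le_map_eval_additivePolynomial v (c * z)).trans_eq (congrArg v hzn)
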